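/- arXiv:0906.0377 — 2 statements merged into one kernel-verified Lean document; each statement's English description precedes it below -/
import Mathlib

section
/- Let r ∈ [n] and let σ be a word consisting of the n−1 elements of [n]\{r} in some order. Then the major increment sequence MIS(σ,r) = (mi(σ,1,r), ..., mi(σ,n,r)) is a permutation of the set {0, 1, ..., n−1}; that is, the n values mi(σ,k,r) for k = 1,...,n are pairwise distinct and are exactly the integers 0 through n−1. -/
open Polynomial

/-- The word (1, 2, ..., n) as a list of integers. -/
def W (n : ℕ) : List ℤ := (List.range n).map (fun i => (i : ℤ) + 1)

/-- Descent set of a word: 1-based indices i ∈ {1,...,m-1} with w(i) > w(i+1). -/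
def descSet (w : List ℤ) : Finset ℕ :=
  (Finset.Icc 1 (w.length - 1)).filter (fun i => w.getD (i - 1) 0 > w.getD i 0)

/-- Major index of a word: the sum of its descents. -/
def maj (w : List ℤ) : ℕ := ∑ i ∈ descSet w, i

/-- `dstat w k` is the number of descents of `w` that are ≥ k. -/
def dstat (w : List ℤ) (k : ℕ) : ℕ := ((descSet w).filter (fun i => k ≤ i)).card

/-- Major increment: the change in major index when `r` is inserted into `w`
at (1-based) position `k`. -/
def mi (w : List ℤ) (k : ℕ) (r : ℤ) : ℤ := (maj (w.insertIdx (k - 1) r) : ℤ) - (maj w : ℤ)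

/-- The q-factorial [m]_q! = ∏_{i=1}^m (1 + q + ... + q^{i-1}), as a polynomial in q. -/
noncomputable def qFact (m : ℕ) : Polynomial ℚ :=
  ∏ i ∈ Finset.range m, ∑ j ∈ Finset.range (i + 1), (X : Polynomial ℚ) ^ j

/-- The q-binomial coefficient [n choose a]_q = [n]_q!/([a]_q!·[n−a]_q!). -/
noncomputable def qBinom (n a : ℕ) : Polynomial ℚ := qFact n / (qFact a * qFact (n - a))

/-- The set of all shuffles of two words `θ` and `π` (words containing `θ` and `π`
as complementary subwords). -/
def shuffles (θ π : List ℤ) : Finset (List ℤ) :=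
  (θ ++ π).permutations.toFinset.filter (fun σ => θ.Sublist σ ∧ π.Sublist σ)


/-!
Induct on `σ` by appending a letter `x` to a word `w` with last letter `c`. Inserting `r` at a
position `k ≤ |w|` moves the possible descent `c > x` from position `|w|` to `|w| + 1`, so each of
these increments grows by one exactly when `c > x`; the increments at the last two positions are
computed directly. Comparing `r` and `x` with `c` leaves four cases, and in each the
old values `0, …, |w|` reassemble with the two new ones into `0, …, |w| + 1`.
-/

namespace Multiset

variable {α : Type*} [LinearOrder α] [One α] [LocallyFiniteOrder α] [Add α] [SuccAddOrder α]
  [NoMaxOrder α] {a b : α}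

theorem Icc_add_one_right (h : a ≤ b + 1) : Icc a (b + 1) = (b + 1) ::ₘ Icc a b := by
  rw [Icc, Icc, ← Finset.insert_Icc_right_eq_Icc_add_one h,
    Finset.insert_val_of_notMem (by simp)]

theorem Ico_eq_cons_Ico_add_one (h : a < b) : Ico a b = a ::ₘ Ico (a + 1) b := by
  rw [Ico, Ico, ← Finset.insert_Ico_add_one_left_eq_Ico h,
    Finset.insert_val_of_notMem (by simp [Order.add_one_le_iff])]

theorem Ico_add_one_right (h : a ≤ b) : Ico a (b + 1) = b ::ₘ Ico a b := by
  rw [Ico, Ico, ← Finset.insert_Ico_right_eq_Ico_add_one h,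
    Finset.insert_val_of_notMem Finset.right_notMem_Ico]

end Multiset

namespace List

variable {α : Type*}

theorem getLastD_eq_getD (l : List α) (d : α) : l.getLastD d = l.getD (l.length - 1) d := by
  simp [getLastD_eq_getLast?, getLast?_eq_getElem?, getD_eq_getElem?_getD]

theorem insertIdx_append_of_le_length (l l' : List α) (a : α) {i : ℕ} (h : i ≤ l.length) :
    (l ++ l').insertIdx i a = l.insertIdx i a ++ l' := by
  induction l generalizing i with
  | nil => simp_all
  | cons b l ih =>
    cases i with
    | zero => simp
    | succ i => simp [ih (Nat.le_of_succ_le_succ h)]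

theorem getLastD_insertIdx_of_lt (l : List α) (a d : α) {i : ℕ} (h : i < l.length) :
    (l.insertIdx i a).getLastD d = l.getLastD d := by
  obtain rfl | ⟨l, b, rfl⟩ := l.eq_nil_or_concat'
  · simp at h
  rw [length_append, length_singleton] at h
  rw [insertIdx_append_of_le_length _ _ _ (Nat.le_of_lt_succ h), getLastD_concat,
    getLastD_concat]

end List

theorem maj_eq_sum (w : List ℤ) :
    maj w = ∑ i ∈ Finset.Icc 1 (w.length - 1), if w.getD i 0 < w.getD (i - 1) 0 then i else 0 :=
  Finset.sum_filter _ _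

theorem maj_append_singleton (w : List ℤ) (x : ℤ) :
    maj (w ++ [x]) = maj w + if x < w.getLastD 0 then w.length else 0 := by
  rw [maj_eq_sum, maj_eq_sum, List.length_append, List.length_singleton, Nat.add_sub_cancel,
    List.getLastD_eq_getD]
  cases hw : w.length with
  | zero => simp
  | succ m =>
    rw [Finset.sum_Icc_succ_top (by omega), Nat.add_sub_cancel,
      List.getD_append w [x] 0 m (by omega), List.getD_append_right w [x] 0 (m + 1) (by omega), hw,
      Nat.sub_self, List.getD_cons_zero]
    congr 1
    refine Finset.sum_congr rfl fun i hi => ?_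
    rw [Finset.mem_Icc] at hi
    rw [List.getD_append _ _ _ _ (by omega), List.getD_append _ _ _ _ (by omega)]

theorem mi_length_add_one (w : List ℤ) (r : ℤ) :
    mi w (w.length + 1) r = if r < w.getLastD 0 then (w.length : ℤ) else 0 := by
  rw [mi, Nat.add_sub_cancel, List.insertIdx_length_self, maj_append_singleton]
  split_ifs <;> simp

theorem mi_append_singleton_of_le (w : List ℤ) (x r : ℤ) {k : ℕ} (hk : 1 ≤ k)
    (hkw : k ≤ w.length) :
    mi (w ++ [x]) k r = mi w k r + if x < w.getLastD 0 then 1 else 0 := by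
  rw [mi, mi, List.insertIdx_append_of_le_length _ _ _ (by omega), maj_append_singleton,
    maj_append_singleton, List.getLastD_insertIdx_of_lt _ _ _ (by omega),
    List.length_insertIdx_of_le_length (by omega)]
  split_ifs <;> push_cast <;> ring

theorem mi_append_singleton_length_add_one (w : List ℤ) (x r : ℤ) :
    mi (w ++ [x]) (w.length + 1) r =
      (if r < w.getLastD 0 then (w.length : ℤ) else 0) +
        (if x < r then (w.length : ℤ) + 1 else 0) -
        (if x < w.getLastD 0 then (w.length : ℤ) else 0) := by
  rw [mi, Nat.add_sub_cancel, List.insertIdx_append_of_le_length _ _ _ le_rfl,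
    List.insertIdx_length_self, maj_append_singleton, maj_append_singleton,
    maj_append_singleton, List.getLastD_concat, List.length_append, List.length_singleton]
  split_ifs <;> push_cast <;> ring

section

open Multiset

theorem cons_cons_Ico_one_eq_Ico_zero {m : ℕ} {x r : ℤ} (hrx : r ≠ x) :
    (if r < x then (m : ℤ) + 1 else 0) ::ₘ (if x < r then (m : ℤ) + 1 else 0) ::ₘ
      Ico 1 ((m : ℤ) + 1) = Ico 0 ((m : ℤ) + 2) := by
  have hm : (0 : ℤ) ≤ m := m.cast_nonneg
  have hIco : Ico (0 : ℤ) (m + 2) = 0 ::ₘ ((m : ℤ) + 1) ::ₘ Ico 1 ((m : ℤ) + 1) := by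
    rw [Ico_eq_cons_Ico_add_one (by omega), zero_add, show (m : ℤ) + 2 = m + 1 + 1 by ring,
      Ico_add_one_right (by omega)]
  rw [hIco]
  rcases hrx.lt_or_gt with h | h
  · rw [if_pos h, if_neg h.not_gt]
    exact cons_swap _ _ _
  · rw [if_neg h.not_gt, if_pos h]

/-- The inductive step of `map_mi_Icc`: `m = |w|`, `c` is the last letter of `w` and `S` holds the
increments of `w` at positions `1, …, m`. -/
theorem cons_cons_map_eq_Ico {m : ℕ} {S : Multiset ℤ} {c x r : ℤ} (hrx : r ≠ x)
    (hS : (if r < c then (m : ℤ) else 0) ::ₘ S = Ico 0 ((m : ℤ) + 1)) :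
    (if r < x then (m : ℤ) + 1 else 0) ::ₘ
      ((if r < c then (m : ℤ) else 0) + (if x < r then (m : ℤ) + 1 else 0) -
          (if x < c then (m : ℤ) else 0)) ::ₘ
        S.map (· + if x < c then 1 else 0) = Ico 0 ((m : ℤ) + 2) := by
  have hm : (0 : ℤ) ≤ m := m.cast_nonneg
  by_cases hrc : r < c
  · rw [if_pos hrc, Ico_add_one_right hm, cons_inj_right] at hS
    subst hS
    by_cases hxc : x < c
    · simp only [if_pos hxc, if_pos hrc, map_add_right_Ico, zero_add, add_sub_cancel_left]
      exact cons_cons_Ico_one_eq_Ico_zero hrx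
    · have hrx' : r < x := by omega
      simp only [if_neg hxc, if_pos hrc, if_pos hrx', if_neg hrx'.not_gt, add_zero, sub_zero,
        map_id']
      rw [show (m : ℤ) + 2 = m + 1 + 1 by ring, Ico_add_one_right (by omega),
        Ico_add_one_right hm]
  · rw [if_neg hrc, Ico_eq_cons_Ico_add_one (by omega), zero_add, cons_inj_right] at hS
    subst hS
    by_cases hxc : x < c
    · have hxr : x < r := by omega
      have hIco : Ico (0 : ℤ) (m + 2) = 0 ::ₘ 1 ::ₘ Ico 2 ((m : ℤ) + 2) := by
        rw [Ico_eq_cons_Ico_add_one (show (0 : ℤ) < m + 2 by omega), zero_add,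
          Ico_eq_cons_Ico_add_one (show (1 : ℤ) < m + 2 by omega)]
        rfl
      simp only [if_pos hxc, if_neg hrc, if_pos hxr, if_neg hxr.not_gt, map_add_right_Ico, hIco]
      congr 2
      ring
    · simp only [if_neg hxc, if_neg hrc, zero_add, sub_zero, add_zero, map_id']
      exact cons_cons_Ico_one_eq_Ico_zero hrx

theorem map_mi_Icc (σ : List ℤ) (r : ℤ) (hr : r ∉ σ) :
    (Icc 1 (σ.length + 1)).map (mi σ · r) = Ico 0 ((σ.length : ℤ) + 1) := by
  induction σ using List.reverseRecOn with
  | nil =>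
    rw [List.length_nil, Nat.cast_zero, Ico_add_one_right le_rfl, Ico_self, zero_add, Icc_self,
      map_singleton]
    simpa using mi_length_add_one [] r
  | append_singleton w x ih =>
    rw [List.mem_append, List.mem_singleton, not_or] at hr
    obtain ⟨hrw, hrx⟩ := hr
    have hS := ih hrw
    rw [Icc_add_one_right (by omega), map_cons, mi_length_add_one] at hS
    have hfirst : (Icc 1 w.length).map (mi (w ++ [x]) · r) =
        ((Icc 1 w.length).map (mi w · r)).map (· + if x < w.getLastD 0 then 1 else 0) := by
      rw [Multiset.map_map]
      exact map_congr rfl fun k hk =>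
        mi_append_singleton_of_le w x r (mem_Icc.1 hk).1 (mem_Icc.1 hk).2
    have hlast :
        mi (w ++ [x]) (w.length + 1 + 1) r = if r < x then (w.length : ℤ) + 1 else 0 := by
      simpa using mi_length_add_one (w ++ [x]) r
    rw [List.length_append, List.length_singleton, Icc_add_one_right (by omega),
      Icc_add_one_right (by omega), map_cons, map_cons, hlast,
      mi_append_singleton_length_add_one, hfirst, Nat.cast_succ, add_assoc, one_add_one_eq_two]
    exact cons_cons_map_eq_Ico hrx hS

end

-- The coercion `List ℕ → List ℤ` in `W` elaborates to a monadic bind.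
theorem W_eq (n : ℕ) : W n = (List.range n).map (fun i : ℕ => (i : ℤ) + 1) := by
  simp [W, ← List.map_eq_flatMap]

theorem nodup_W (n : ℕ) : (W n).Nodup := by
  rw [W_eq]
  exact List.nodup_range.map fun a b h => by simpa using h

theorem length_W (n : ℕ) : (W n).length = n := by
  simp [W_eq]

/-- Proposition 3.1: if r ∈ [n] and σ is a word on [n]\{r}, then the major increment
sequence MIS(σ,r) = (mi(σ,1,r),...,mi(σ,n,r)) is a permutation of {0,1,...,n-1}:
the n values are pairwise distinct and are exactly the integers 0 through n-1. -/
theorem mis_perm (n : ℕ) (r : ℤ) (hr : r ∈ W n) (σ : List ℤ)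
    (hσ : σ.Perm ((W n).erase r)) :
    Set.InjOn (fun k => mi σ k r) (Set.Icc 1 n) ∧
      (Finset.Icc 1 n).image (fun k => mi σ k r) =
        (Finset.range n).image (fun j => ((j : ℕ) : ℤ)) := by
  have hrσ : r ∉ σ := fun h => (nodup_W n).not_mem_erase (hσ.subset h)
  have hlen : σ.length + 1 = n := by
    have hn : 0 < n := length_W n ▸ List.length_pos_of_mem hr
    rw [hσ.length_eq, List.length_erase_of_mem hr, length_W]
    omega
  have hmap : (Finset.Icc 1 n).val.map (fun k => mi σ k r) = (Finset.Ico (0 : ℤ) n).val := by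
    subst hlen
    push_cast
    exact map_mi_Icc σ r hrσ
  have hrange : (Finset.range n).image (fun j => ((j : ℕ) : ℤ)) = Finset.Ico 0 (n : ℤ) :=
    Finset.coe_injective (by simpa using Nat.image_cast_int_Iio n)
  have hnodup : ((Finset.Icc 1 n).val.map (fun k => mi σ k r)).Nodup := hmap ▸ Finset.nodup _
  refine ⟨fun a ha b hb => ?_, ?_⟩
  · exact (Multiset.nodup_map_iff_inj_on (Finset.nodup _)).1 hnodup a (by simpa using ha) b
      (by simpa using hb)
  · rw [hrange, ← Finset.val_inj, Finset.image_val, hmap, (Finset.nodup _).dedup]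
end

section
/- Let σ be a word of n−1 distinct integers and let r be an integer less than every letter of σ. Then for every k with 1 ≤ k ≤ n−1, the set of the first k entries of MIS(σ,r), i.e., {mi(σ,1,r), ..., mi(σ,k,r)}, equals the integer interval {d_k(σ), d_k(σ)+1, ..., d_k(σ)+k−1}. -/
open Polynomial

/-!
Inserting a letter `r` smaller than every letter of `σ` at the 0-based index `p < |σ|`
keeps the descents of `σ` left of `p`, shifts those right of `p` by one, makes `p` a descent
when `p ≥ 1` (since `σ(p) > r`) and never makes `p + 1` one (since `r < σ(p+1)`). Hence
`mi(σ, p+1, r)` is `d_{p+1}(σ)` if `p` is a descent of `σ` and `d_{p+1}(σ) + p` otherwise.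
As `d_p = d_{p+1} + [p is a descent]`, the new entry `mi(σ, p+1, r)` extends the interval formed
by the previous ones at its lower end in the first case and at its upper end in the second.
-/

open Finset

theorem Finset.sum_filter_lt_add_ite_add_sum_filter_gt {α M : Type*} [LinearOrder α]
    [AddCommMonoid M] (s : Finset α) (a : α) (f : α → M) :
    ∑ i ∈ s with i < a, f i + (if a ∈ s then f a else 0) + ∑ i ∈ s with a < i, f i =
      ∑ i ∈ s, f i := by
  rw [sum_filter, sum_filter, ← sum_ite_eq' s a f, ← sum_add_distrib, ← sum_add_distrib]
  refine sum_congr rfl fun i _ => ?_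
  rcases lt_trichotomy i a with h | rfl | h
  · simp [h, h.ne, h.not_gt]
  · simp
  · simp [h, h.ne', h.not_gt]

theorem Finset.card_filter_le_eq_card_filter_lt_add_ite {α : Type*} [LinearOrder α]
    (s : Finset α) (a : α) :
    #{i ∈ s | a ≤ i} = #{i ∈ s | a < i} + if a ∈ s then 1 else 0 := by
  rw [card_filter, card_filter, ← sum_ite_eq' s a (fun _ => 1), ← sum_add_distrib]
  refine sum_congr rfl fun i _ => ?_
  rcases lt_trichotomy i a with h | rfl | h
  · simp [h.not_ge, h.not_gt, h.ne]
  · simp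
  · simp [h, h.le, h.ne']

theorem List.getD_insertIdx {α : Type*} (l : List α) (x d : α) {p : ℕ} (hp : p ≤ l.length)
    (i : ℕ) :
    (l.insertIdx p x).getD i d =
      if i < p then l.getD i d else if i = p then x else l.getD (i - 1) d := by
  simp only [getD_eq_getElem?_getD, getElem?_insertIdx]
  split_ifs <;> simp_all

theorem List.lt_getD_of_forall_lt {α : Type*} [LT α] {l : List α} {r : α} (d : α)
    (hr : ∀ x ∈ l, r < x) {j : ℕ} (hj : j < l.length) : r < l.getD j d := by
  rw [getD_eq_getElem _ _ hj]
  exact hr _ (l.getElem_mem hj)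

theorem mem_descSet {w : List ℤ} {i : ℕ} :
    i ∈ descSet w ↔ (1 ≤ i ∧ i ≤ w.length - 1) ∧ w.getD i 0 < w.getD (i - 1) 0 := by
  simp [descSet]

section InsertMin

variable {σ : List ℤ} {r : ℤ}

theorem descSet_insertIdx_of_forall_lt (hr : ∀ x ∈ σ, r < x) {p : ℕ} (hp : p < σ.length) :
    descSet (σ.insertIdx p r) =
      {i ∈ descSet σ | i < p} ∪ {i ∈ descSet σ | p < i}.map (addRightEmbedding 1) ∪
        if p = 0 then ∅ else {p} := by
  ext i
  have hlen : (σ.insertIdx p r).length = σ.length + 1 :=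
    List.length_insertIdx_of_le_length hp.le r
  simp only [mem_descSet, hlen, List.getD_insertIdx σ r 0 hp.le, mem_union, mem_filter, mem_map,
    addRightEmbedding_apply, Nat.add_sub_cancel]
  rcases i with _ | j
  · split_ifs <;> simp <;> omega
  have h₁ := fun (hj : j < σ.length) => List.lt_getD_of_forall_lt 0 hr hj
  have h₂ := fun (hj : j - 1 < σ.length) => List.lt_getD_of_forall_lt 0 hr hj
  simp only [add_left_inj, exists_eq_right, Nat.add_sub_cancel]
  split_ifs <;> simp only [mem_singleton, notMem_empty, or_false] <;> omega

theorem maj_insertIdx_of_forall_lt (hr : ∀ x ∈ σ, r < x) {p : ℕ} (hp : p < σ.length) :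
    maj (σ.insertIdx p r) + (if p ∈ descSet σ then p else 0) = maj σ + p + dstat σ (p + 1) := by
  have hdisj :
      Disjoint {i ∈ descSet σ | i < p} ({i ∈ descSet σ | p < i}.map (addRightEmbedding 1)) :=
    disjoint_left.2 fun i h₁ h₂ => by simp at h₁ h₂; omega
  have hdisj' : Disjoint
      ({i ∈ descSet σ | i < p} ∪ {i ∈ descSet σ | p < i}.map (addRightEmbedding 1))
      (if p = 0 then ∅ else {p}) := by
    split_ifs
    · exact disjoint_empty_right _
    · refine disjoint_singleton_right.2 ?_
      simp only [mem_union, mem_filter, mem_map, addRightEmbedding_apply]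
      rintro (⟨-, h⟩ | ⟨i, ⟨-, h⟩, rfl⟩) <;> omega
  have hdstat : dstat σ (p + 1) = #{i ∈ descSet σ | p < i} := rfl
  have hsplit := sum_filter_lt_add_ite_add_sum_filter_gt (descSet σ) p (fun i => i)
  rw [maj, maj, descSet_insertIdx_of_forall_lt hr hp, sum_union hdisj', sum_union hdisj, sum_map,
    hdstat]
  simp only [addRightEmbedding_apply, sum_add_distrib, sum_const, smul_eq_mul, mul_one]
  split_ifs at hsplit ⊢ <;> simp only [sum_empty, sum_singleton] <;> omega

theorem mi_succ_of_forall_lt (hr : ∀ x ∈ σ, r < x) {p : ℕ} (hp : p < σ.length) :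
    mi σ (p + 1) r = dstat σ (p + 1) + if p ∈ descSet σ then 0 else (p : ℤ) := by
  have h := maj_insertIdx_of_forall_lt hr hp
  rw [mi, Nat.add_sub_cancel]
  split_ifs at h ⊢ <;> omega

theorem image_mi_Icc_of_forall_lt (hr : ∀ x ∈ σ, r < x) {k : ℕ} (hk : k ≤ σ.length) :
    (Icc 1 k).image (fun j => mi σ j r) = Icc (dstat σ k : ℤ) (dstat σ k + k - 1) := by
  induction k with
  | zero => simp
  | succ k ih =>
    have hd : dstat σ k = dstat σ (k + 1) + if k ∈ descSet σ then 1 else 0 :=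
      card_filter_le_eq_card_filter_lt_add_ite _ _
    rw [← insert_Icc_right_eq_Icc_add_one (by omega : 1 ≤ k + 1), image_insert, ih (by omega),
      mi_succ_of_forall_lt hr hk]
    ext x
    simp only [mem_insert, mem_Icc]
    split_ifs at hd ⊢ <;> push_cast <;> omega

end InsertMin

theorem mis_initial_segment_min_general (n : ℕ) (σ : List ℤ)
    (hlen : σ.length + 1 = n) (r : ℤ) (hr : ∀ x ∈ σ, r < x)
    (k : ℕ) (hk : k ≤ n - 1) :
    (Finset.Icc 1 k).image (fun j => mi σ j r) =
      Finset.Icc ((dstat σ k : ℤ)) ((dstat σ k : ℤ) + k - 1) :=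
  image_mi_Icc_of_forall_lt hr (by omega)

/-- If r is less than every letter of σ, then for 1 ≤ k ≤ n-1 the set of the first k
entries of MIS(σ,r) is the integer interval {dₖ(σ), ..., dₖ(σ)+k-1}. -/
theorem mis_initial_segment_min (n : ℕ) (σ : List ℤ) (hnd : σ.Nodup)
    (hlen : σ.length + 1 = n) (r : ℤ) (hr : ∀ x ∈ σ, r < x)
    (k : ℕ) (hk1 : 1 ≤ k) (hk : k ≤ n - 1) :
    (Finset.Icc 1 k).image (fun j => mi σ j r) =
      Finset.Icc ((dstat σ k : ℤ)) ((dstat σ k : ℤ) + k - 1) :=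
  mis_initial_segment_min_general n σ hlen r hr k hk
end
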